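/- arXiv:0905.3026 — 3 statements merged into one kernel-verified Lean document; each statement's English description precedes it below -/
import Mathlib

section
/- Let H_R be a real Hilbert space and U_R an orthogonal transformation whose complexification U_C has nonempty point spectrum. Then the tensor product operator U_R ⊗ U_R on H_R ⊗ H_R has a nonzero invariant vector. Specifically, if U_C(x+iy) = e^{iθ}(x+iy) with x+iy ≠ 0, then x⊗x + y⊗y is a nonzero vector fixed by U_R ⊗ U_R. -/
/-!
Writing `x + iy` through the real embedding `j`, the eigenvalue equation
`U_C (x + iy) = e^{iθ} (x + iy)` splits into its real and imaginary parts: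
`U x = cos θ • x - sin θ • y` and `U y = sin θ • x + cos θ • y`, so `U` acts on `span {x, y}`
as a rotation. Since `cos² θ + sin² θ = 1`, the cross terms cancel when `U ⊗ U` is applied to
`x ⊗ x + y ⊗ y`, which is therefore fixed. It is nonzero because its squared
norm is `‖x‖⁴ + 2 ⟪x, y⟫² + ‖y‖⁴`.
-/

open Complex

section Complexification

variable {E F : Type*} [AddCommGroup E] [Module ℝ E] [AddCommGroup F] [Module ℂ F] [Module ℝ F]

theorem eq_and_eq_of_add_I_smul_eq {j : E →ₗ[ℝ] F}
    (hj : ∀ a b : E, j a + I • j b = 0 → a = 0 ∧ b = 0) {a b a' b' : E}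
    (h : j a + I • j b = j a' + I • j b') : a = a' ∧ b = b' := by
  have hdiff : j (a - a') + I • j (b - b') = 0 := by
    rw [map_sub, map_sub, smul_sub, sub_add_sub_comm, h, sub_self]
  simpa only [sub_eq_zero] using hj _ _ hdiff

theorem exp_mul_I_smul_add_I_smul [IsScalarTower ℝ ℂ F] (j : E →ₗ[ℝ] F) (θ : ℝ) (x y : E) :
    exp (θ * I) • (j x + I • j y)
      = j (Real.cos θ • x - Real.sin θ • y) + I • j (Real.sin θ • x + Real.cos θ • y) := by
  have real_smul (r : ℝ) (v : F) : r • v = (r : ℂ) • v := (algebraMap_smul ℂ r v).symm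
  rw [exp_mul_I]
  simp only [map_sub, map_add, map_smul, real_smul]
  match_scalars
  · ring
  · linear_combination sin (θ : ℂ) * I_sq

theorem rotation_of_complexification_eigenvector {j : E →ₗ[ℝ] F}
    (hj : ∀ a b : E, j a + I • j b = 0 → a = 0 ∧ b = 0)
    [IsScalarTower ℝ ℂ F] {U : E →ₗ[ℝ] E} {Uc : F →ₗ[ℂ] F} (hext : ∀ a : E, Uc (j a) = j (U a))
    {θ : ℝ} {x y : E} (heig : Uc (j x + I • j y) = exp (θ * I) • (j x + I • j y)) :
    U x = Real.cos θ • x - Real.sin θ • y ∧ U y = Real.sin θ • x + Real.cos θ • y := by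
  refine eq_and_eq_of_add_I_smul_eq hj ?_
  rw [← exp_mul_I_smul_add_I_smul, ← heig, map_add, map_smul, hext, hext]

end Complexification

theorem LinearMap.apply_self_add_apply_self_of_rotation {R M N : Type*} [CommRing R]
    [AddCommGroup M] [Module R M] [AddCommGroup N] [Module R N] (f : M →ₗ[R] M →ₗ[R] N)
    {c s : R} (hcs : s ^ 2 + c ^ 2 = 1) (x y : M) :
    f (c • x - s • y) (c • x - s • y) + f (s • x + c • y) (s • x + c • y) = f x x + f y y := by
  simp only [map_sub, map_add, map_smul, LinearMap.sub_apply, LinearMap.add_apply,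
    LinearMap.smul_apply]
  calc _ = (s ^ 2 + c ^ 2) • f x x + (s ^ 2 + c ^ 2) • f y y := by module
    _ = f x x + f y y := by rw [hcs, one_smul, one_smul]

section TensorSquare

variable {E T : Type*} [NormedAddCommGroup E] [InnerProductSpace ℝ E] [NormedAddCommGroup T]
  [InnerProductSpace ℝ T] {tsr : E → E → T}
  (htsr : ∀ a b c d : E, inner ℝ (tsr a b) (tsr c d) = inner ℝ a c * inner ℝ b d)
include htsr

theorem inner_tensor_self_add_tensor_self (x y : E) :
    inner ℝ (tsr x x + tsr y y) (tsr x x + tsr y y)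
      = inner ℝ x x ^ 2 + 2 * inner ℝ x y ^ 2 + inner ℝ y y ^ 2 := by
  rw [inner_add_add_self, htsr, htsr, htsr, htsr, real_inner_comm y x]
  ring

theorem tensor_self_add_tensor_self_ne_zero {x y : E} (hxy : ¬ (x = 0 ∧ y = 0)) :
    tsr x x + tsr y y ≠ 0 := by
  intro h0
  have hsum : inner ℝ x x ^ 2 + 2 * inner ℝ x y ^ 2 + inner ℝ y y ^ 2 = (0 : ℝ) := by
    rw [← inner_tensor_self_add_tensor_self htsr, h0, inner_zero_left]
  have hx : inner ℝ x x = (0 : ℝ) := by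
    nlinarith [sq_nonneg (inner ℝ x y : ℝ), sq_nonneg (inner ℝ y y : ℝ)]
  have hy : inner ℝ y y = (0 : ℝ) := by
    nlinarith [sq_nonneg (inner ℝ x y : ℝ), sq_nonneg (inner ℝ x x : ℝ)]
  exact hxy ⟨inner_self_eq_zero.mp hx, inner_self_eq_zero.mp hy⟩

end TensorSquare

theorem stmt1_general
    (H : Type*) [NormedAddCommGroup H] [InnerProductSpace ℝ H]
    (Hc : Type*) [NormedAddCommGroup Hc] [InnerProductSpace ℂ Hc]
    (HT : Type*) [NormedAddCommGroup HT] [InnerProductSpace ℝ HT]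
    (U : H ≃ₗᵢ[ℝ] H) (Uc : Hc ≃ₗᵢ[ℂ] Hc)
    (j : H →ₗ[ℝ] Hc)
    (huniq : ∀ a b : H, j a + Complex.I • j b = 0 → a = 0 ∧ b = 0)
    (hext : ∀ a : H, Uc (j a) = j (U a))
    -- the Hilbert tensor product H ⊗ H and the operator W = U ⊗ U:
    (tsr : H →ₗ[ℝ] H →ₗ[ℝ] HT)
    (htsr : ∀ a b c d : H,
      (inner ℝ (tsr a b) (tsr c d) : ℝ) = (inner ℝ a c : ℝ) * (inner ℝ b d : ℝ))
    (W : HT ≃ₗᵢ[ℝ] HT)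
    (hW : ∀ a b : H, W (tsr a b) = tsr (U a) (U b))
    -- an eigenvalue e^{iθ} of Uc with eigenvector x + iy ≠ 0:
    (θ : ℝ) (x y : H) (hv : ¬ (x = 0 ∧ y = 0))
    (heig : Uc (j x + Complex.I • j y)
      = Complex.exp (θ * Complex.I) • (j x + Complex.I • j y)) :
    tsr x x + tsr y y ≠ 0 ∧ W (tsr x x + tsr y y) = tsr x x + tsr y y := by
  obtain ⟨hUx, hUy⟩ := rotation_of_complexification_eigenvector (U := U.toLinearMap)
    (Uc := Uc.toLinearMap) huniq hext heig
  refine ⟨tensor_self_add_tensor_self_ne_zero (tsr := fun a b => tsr a b) htsr hv, ?_⟩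
  rw [map_add, hW, hW]
  exact hUx ▸ hUy ▸ tsr.apply_self_add_apply_self_of_rotation (Real.sin_sq_add_cos_sq θ) x y

/-- Let `H` be a real Hilbert space and `U` an orthogonal transformation whose
complexification `Uc` (encoded via a real-linear embedding `j : H →ₗ[ℝ] Hc` with independent
real and imaginary parts, intertwining `U` and `Uc`) has nonempty point spectrum:
`Uc (x+iy) = e^{iθ} (x+iy)` with `x+iy ≠ 0`.  Then the tensor product operator `U ⊗ U`
acting on the Hilbert tensor product `H ⊗ H` (encoded by a bilinear map `tsr` whose
elementary tensors have the correct inner products, intertwined with `W = U ⊗ U`)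
has a nonzero invariant vector; specifically, `x⊗x + y⊗y` is nonzero and fixed by `U ⊗ U`. -/
theorem stmt1
    (H : Type*) [NormedAddCommGroup H] [InnerProductSpace ℝ H] [CompleteSpace H]
    (Hc : Type*) [NormedAddCommGroup Hc] [InnerProductSpace ℂ Hc] [CompleteSpace Hc]
    (HT : Type*) [NormedAddCommGroup HT] [InnerProductSpace ℝ HT] [CompleteSpace HT]
    (U : H ≃ₗᵢ[ℝ] H) (Uc : Hc ≃ₗᵢ[ℂ] Hc)
    (j : H →ₗ[ℝ] Hc)
    (huniq : ∀ a b : H, j a + Complex.I • j b = 0 → a = 0 ∧ b = 0)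
    (hext : ∀ a : H, Uc (j a) = j (U a))
    -- the Hilbert tensor product H ⊗ H and the operator W = U ⊗ U:
    (tsr : H →ₗ[ℝ] H →ₗ[ℝ] HT)
    (htsr : ∀ a b c d : H,
      (inner ℝ (tsr a b) (tsr c d) : ℝ) = (inner ℝ a c : ℝ) * (inner ℝ b d : ℝ))
    (W : HT ≃ₗᵢ[ℝ] HT)
    (hW : ∀ a b : H, W (tsr a b) = tsr (U a) (U b))
    -- an eigenvalue e^{iθ} of Uc with eigenvector x + iy ≠ 0:
    (θ : ℝ) (x y : H) (hv : ¬ (x = 0 ∧ y = 0))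
    (heig : Uc (j x + Complex.I • j y)
      = Complex.exp (θ * Complex.I) • (j x + Complex.I • j y)) :
    tsr x x + tsr y y ≠ 0 ∧ W (tsr x x + tsr y y) = tsr x x + tsr y y :=
  stmt1_general H Hc HT U Uc j huniq hext tsr htsr W hW θ x y hv heig
end

section
/- Let U be a unitary operator on a Hilbert space H. If U is weakly mixing, i.e. (1/n)∑_{k=1}^{n} |⟨U^k ξ, η⟩| → 0 for all ξ, η ∈ H, then for any natural numbers m, n ≥ 1 with m + n ≥ 1, the unitary (U*)^{⊗m} ⊗ U^{⊗n} on H^{⊗(m+n)} is also weakly mixing. -/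
/-!
On an elementary tensor, `⟪V^k (t f), t g⟫ = ∏ i, ⟪W i^k (f i), g i⟫` with each `W i` equal to
`U` or `U*`. Every factor has modulus at most `‖f i‖ * ‖g i‖`, so the product is bounded by a
constant times a single factor, and `U*` is weakly mixing along with `U` because
`⟪U*^k x, y⟫ = ⟪x, U^k y⟫`. Hence the Cesàro means of `‖⟪V^k x, y⟫‖` vanish for elementary
tensors. For fixed `y` these means are seminorms in `x`, uniformly `‖y‖`-Lipschitz, so the set of
`x` where they tend to `0` is a closed subspace; the same holds in `y`, and density of the span of
the elementary tensors finishes the proof.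
-/

open Filter Finset

open scoped InnerProductSpace Topology NNReal

noncomputable def cesaroMean (u : ℕ → ℝ) (N : ℕ) : ℝ :=
  (N : ℝ)⁻¹ * ∑ k ∈ Icc 1 N, u k

section CesaroMean

variable {u v : ℕ → ℝ}

lemma cesaroMean_add (u v : ℕ → ℝ) (N : ℕ) :
    cesaroMean (fun k => u k + v k) N = cesaroMean u N + cesaroMean v N := by
  simp only [cesaroMean, sum_add_distrib, mul_add]

lemma cesaroMean_const_mul (c : ℝ) (u : ℕ → ℝ) (N : ℕ) :
    cesaroMean (fun k => c * u k) N = c * cesaroMean u N := by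
  simp only [cesaroMean, ← mul_sum]
  ring

lemma cesaroMean_mono (h : ∀ k, u k ≤ v k) (N : ℕ) : cesaroMean u N ≤ cesaroMean v N :=
  mul_le_mul_of_nonneg_left (sum_le_sum fun k _ => h k) (by positivity)

lemma cesaroMean_nonneg (h : ∀ k, 0 ≤ u k) (N : ℕ) : 0 ≤ cesaroMean u N :=
  mul_nonneg (by positivity) (sum_nonneg fun k _ => h k)

lemma cesaroMean_const_le (c : ℝ) (hc : 0 ≤ c) (N : ℕ) : cesaroMean (fun _ => c) N ≤ c := by
  rcases N.eq_zero_or_pos with rfl | hN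
  · simpa [cesaroMean] using hc
  · simp [cesaroMean, hN.ne']

lemma tendsto_cesaroMean_zero_of_le (h₀ : ∀ k, 0 ≤ u k) (h : ∀ k, u k ≤ v k)
    (hv : Tendsto (cesaroMean v) atTop (𝓝 0)) : Tendsto (cesaroMean u) atTop (𝓝 0) :=
  tendsto_of_tendsto_of_tendsto_of_le_of_le tendsto_const_nhds hv
    (cesaroMean_nonneg h₀) (cesaroMean_mono h)

lemma tendsto_cesaroMean_zero_add (hu : Tendsto (cesaroMean u) atTop (𝓝 0))
    (hv : Tendsto (cesaroMean v) atTop (𝓝 0)) :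
    Tendsto (cesaroMean fun k => u k + v k) atTop (𝓝 0) := by
  simpa only [add_zero] using (hu.add hv).congr fun N => (cesaroMean_add u v N).symm

lemma tendsto_cesaroMean_zero_const_mul (c : ℝ) (hu : Tendsto (cesaroMean u) atTop (𝓝 0)) :
    Tendsto (cesaroMean fun k => c * u k) atTop (𝓝 0) := by
  simpa only [mul_zero] using (hu.const_mul c).congr fun N => (cesaroMean_const_mul c u N).symm

end CesaroMean

section NullSubmodule

variable {𝕜 E F : Type*} [RCLike 𝕜] [NormedAddCommGroup E] [NormedSpace 𝕜 E]
  [NormedAddCommGroup F] [NormedSpace 𝕜 F]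

def cesaroNullSubmodule (f : ℕ → E →ₗ[𝕜] F) : Submodule 𝕜 E where
  carrier := {x | Tendsto (cesaroMean fun k => ‖f k x‖) atTop (𝓝 0)}
  zero_mem' := tendsto_const_nhds.congr fun N => by simp [cesaroMean]
  add_mem' {x y} hx hy :=
    tendsto_cesaroMean_zero_of_le (fun _ => norm_nonneg _)
      (fun k => (congrArg norm (map_add (f k) x y)).trans_le (norm_add_le _ _))
      (tendsto_cesaroMean_zero_add hx hy)
  smul_mem' c x hx := by
    simpa only [Set.mem_ofPred_eq, map_smul, norm_smul]
      using tendsto_cesaroMean_zero_const_mul ‖c‖ hx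

@[simp]
lemma mem_cesaroNullSubmodule {f : ℕ → E →ₗ[𝕜] F} {x : E} :
    x ∈ cesaroNullSubmodule f ↔ Tendsto (cesaroMean fun k => ‖f k x‖) atTop (𝓝 0) :=
  Iff.rfl

lemma isClosed_cesaroNullSubmodule (f : ℕ → E →ₗ[𝕜] F) (C : ℝ≥0)
    (hf : ∀ k x, ‖f k x‖ ≤ C * ‖x‖) : IsClosed (cesaroNullSubmodule f : Set E) := by
  have hLip : ∀ N, LipschitzWith C fun x => cesaroMean (fun k => ‖f k x‖) N := by
    refine fun N => LipschitzWith.of_le_add_mul C fun x y => ?_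
    have hxy : ∀ k, ‖f k x‖ ≤ ‖f k y‖ + C * dist x y := fun k =>
      calc ‖f k x‖ ≤ ‖f k y‖ + ‖f k (x - y)‖ := by
            simpa only [map_sub] using norm_le_norm_add_norm_sub' (f k x) (f k y)
        _ ≤ ‖f k y‖ + C * dist x y := by grw [hf k (x - y), dist_eq_norm]
    calc cesaroMean (fun k => ‖f k x‖) N
        ≤ cesaroMean (fun k => ‖f k y‖ + C * dist x y) N := cesaroMean_mono hxy N
      _ ≤ cesaroMean (fun k => ‖f k y‖) N + C * dist x y := by
          rw [cesaroMean_add]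
          grw [cesaroMean_const_le _ (by positivity)]
  exact (LipschitzWith.uniformEquicontinuous _ C hLip).equicontinuous.isClosed_setOfPred_tendsto
    continuous_const

end NullSubmodule

lemma Submodule.mem_of_isClosed_of_dense_span {R M : Type*} [Semiring R] [AddCommMonoid M]
    [Module R M] [TopologicalSpace M] [ContinuousAdd M] [ContinuousConstSMul R M]
    {p : Submodule R M} (hp : IsClosed (p : Set M)) {s : Set M} (hs : s ⊆ p)
    (hd : Dense (span R s : Set M)) (x : M) : x ∈ p :=
  top_le_iff.mpr (dense_iff_topologicalClosure_eq_top.mp hd)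
    |>.ge.trans ((span R s).topologicalClosure_minimal (span_le.mpr hs) hp) trivial

lemma norm_iterate_le {E : Type*} [SeminormedAddCommGroup E] {T : E → E}
    (hT : ∀ x, ‖T x‖ ≤ ‖x‖) (k : ℕ) (x : E) : ‖T^[k] x‖ ≤ ‖x‖ := by
  induction k generalizing x with
  | zero => rfl
  | succ k ih => exact (ih (T x)).trans (hT x)

section WeakMixing

variable (𝕜 : Type*) {E : Type*} [RCLike 𝕜] [NormedAddCommGroup E] [InnerProductSpace 𝕜 E]

def IsWeaklyMixing (T : E → E) : Prop :=
  ∀ x y, Tendsto (cesaroMean fun k => ‖⟪T^[k] x, y⟫_𝕜‖) atTop (𝓝 0)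

variable {𝕜}

lemma LinearIsometryEquiv.inner_iterate_symm (U : E ≃ₗᵢ[𝕜] E) (k : ℕ) (x y : E) :
    ⟪U.symm^[k] x, y⟫_𝕜 = ⟪x, U^[k] y⟫_𝕜 := by
  induction k generalizing x with
  | zero => rfl
  | succ k ih =>
    rw [Function.iterate_succ_apply, ih, Function.iterate_succ_apply', U.symm.inner_map_eq_flip,
      LinearIsometryEquiv.symm_symm]

lemma IsWeaklyMixing.symm {U : E ≃ₗᵢ[𝕜] E} (hU : IsWeaklyMixing 𝕜 U) :
    IsWeaklyMixing 𝕜 U.symm := fun x y => by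
  simpa only [U.inner_iterate_symm, norm_inner_symm] using hU y x

lemma norm_inner_iterate_le {V : E → E} (hV : ∀ x, ‖V x‖ ≤ ‖x‖) (k : ℕ) (x y : E) :
    ‖⟪V^[k] x, y⟫_𝕜‖ ≤ ‖x‖ * ‖y‖ :=
  (norm_inner_le_norm _ _).trans (by gcongr; exact norm_iterate_le hV k x)

theorem isWeaklyMixing_of_dense_span {V : E →ₗ[𝕜] E} (hV : ∀ x, ‖V x‖ ≤ ‖x‖) {s : Set E}
    (hs : Dense (Submodule.span 𝕜 s : Set E))
    (h : ∀ x ∈ s, ∀ y ∈ s, Tendsto (cesaroMean fun k => ‖⟪V^[k] x, y⟫_𝕜‖) atTop (𝓝 0)) :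
    IsWeaklyMixing 𝕜 V := by
  have hleft : ∀ y ∈ s, ∀ x,
      Tendsto (cesaroMean fun k => ‖⟪V^[k] x, y⟫_𝕜‖) atTop (𝓝 0) := fun y hy => by
    have hf : ∀ k x, ‖(innerₛₗ 𝕜 y ∘ₗ V ^ k) x‖ = ‖⟪V^[k] x, y⟫_𝕜‖ := fun k x => by
      rw [LinearMap.comp_apply, Module.End.pow_apply, innerₛₗ_apply_apply, norm_inner_symm]
    have hclosed := isClosed_cesaroNullSubmodule _ ‖y‖₊ fun k x => by
      rw [hf, coe_nnnorm, mul_comm]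
      exact norm_inner_iterate_le hV k x y
    simpa only [mem_cesaroNullSubmodule, hf] using
      Submodule.mem_of_isClosed_of_dense_span hclosed
        (fun x hx => by simpa only [SetLike.mem_coe, mem_cesaroNullSubmodule, hf] using h x hx y hy)
        hs
  intro x
  have hclosed := isClosed_cesaroNullSubmodule (fun k => innerₛₗ 𝕜 (V^[k] x)) ‖x‖₊
    fun k y => norm_inner_iterate_le hV k x y
  exact Submodule.mem_of_isClosed_of_dense_span hclosed (fun y hy => hleft y hy x) hs

end WeakMixing

section Tensor

variable {𝕜 E ι : Type*} [RCLike 𝕜] [NormedAddCommGroup E] [InnerProductSpace 𝕜 E] [Fintype ι]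
  {H : ι → Type*} [∀ i, NormedAddCommGroup (H i)] [∀ i, InnerProductSpace 𝕜 (H i)]
  {W : ∀ i, H i → H i} {t : (∀ i, H i) → E} {V : E → E}

lemma norm_inner_iterate_tensor_le [DecidableEq ι] (hW : ∀ i x, ‖W i x‖ ≤ ‖x‖)
    (ht : ∀ f g, ⟪t f, t g⟫_𝕜 = ∏ i, ⟪f i, g i⟫_𝕜) (hV : ∀ f, V (t f) = t (Pi.map W f))
    (i₀ : ι) (k : ℕ) (f g : ∀ i, H i) :
    ‖⟪V^[k] (t f), t g⟫_𝕜‖ ≤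
      (∏ i ∈ univ.erase i₀, ‖f i‖ * ‖g i‖) * ‖⟪(W i₀)^[k] (f i₀), g i₀⟫_𝕜‖ := by
  have hsemi : Function.Semiconj t (Pi.map W) V := fun f => (hV f).symm
  rw [← hsemi.iterate_right k f, Pi.map_iterate, ht]
  simp only [Pi.map_apply, norm_prod]
  rw [← mul_prod_erase univ _ (mem_univ i₀), mul_comm]
  gcongr with i
  exact (norm_inner_le_norm _ _).trans (by gcongr; exact norm_iterate_le (hW i) k _)

theorem isWeaklyMixing_of_tensor (hW : ∀ i x, ‖W i x‖ ≤ ‖x‖) {i₀ : ι}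
    (hW₀ : IsWeaklyMixing 𝕜 (W i₀)) (ht : ∀ f g, ⟪t f, t g⟫_𝕜 = ∏ i, ⟪f i, g i⟫_𝕜)
    (hdense : Dense (Submodule.span 𝕜 (Set.range t) : Set E)) {V : E →ₗ[𝕜] E}
    (hV_norm : ∀ x, ‖V x‖ ≤ ‖x‖) (hV : ∀ f, V (t f) = t (Pi.map W f)) :
    IsWeaklyMixing 𝕜 V := by
  classical
  refine isWeaklyMixing_of_dense_span hV_norm hdense ?_
  rintro _ ⟨f, rfl⟩ _ ⟨g, rfl⟩
  exact tendsto_cesaroMean_zero_of_le (fun _ => norm_nonneg _)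
    (norm_inner_iterate_tensor_le hW ht hV i₀ · f g)
    (tendsto_cesaroMean_zero_const_mul _ (hW₀ (f i₀) (g i₀)))

end Tensor

theorem stmt3_general
    (H : Type*) [NormedAddCommGroup H] [InnerProductSpace ℂ H]
    (K : Type*) [NormedAddCommGroup K] [InnerProductSpace ℂ K]
    (U : H ≃ₗᵢ[ℂ] H) (m n : ℕ) (hmn : 1 ≤ m + n)
    (t : (Fin (m + n) → H) → K)
    (ht : ∀ f g : Fin (m + n) → H,
      (inner ℂ (t f) (t g) : ℂ) = ∏ i, (inner ℂ (f i) (g i) : ℂ))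
    (htdense : Dense (↑(Submodule.span ℂ (Set.range t)) : Set K))
    (V : K ≃ₗᵢ[ℂ] K)
    (hV : ∀ f : Fin (m + n) → H,
      V (t f) = t (fun i => if (i : ℕ) < m then U.symm (f i) else U (f i)))
    (hU : ∀ ξ η : H, Tendsto
      (fun N : ℕ => (N : ℝ)⁻¹ * ∑ k ∈ Icc 1 N, ‖(inner ℂ ((⇑U)^[k] ξ) η : ℂ)‖)
      atTop (nhds 0)) :
    ∀ ξ η : K, Tendsto
      (fun N : ℕ => (N : ℝ)⁻¹ * ∑ k ∈ Icc 1 N, ‖(inner ℂ ((⇑V)^[k] ξ) η : ℂ)‖)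
      atTop (nhds 0) := by
  let W : Fin (m + n) → H → H := fun i x => if (i : ℕ) < m then U.symm x else U x
  have hU_mixing : IsWeaklyMixing ℂ U := hU
  have hW_norm : ∀ i x, ‖W i x‖ ≤ ‖x‖ := fun i x => by
    by_cases hi : (i : ℕ) < m <;>
      simp only [W, hi, if_true, if_false, LinearIsometryEquiv.norm_map, le_rfl]
  have hW_mixing : ∀ i, IsWeaklyMixing ℂ (W i) := fun i => by
    by_cases hi : (i : ℕ) < m
    · simpa only [W, hi, if_true, if_false] using hU_mixing.symm
    · simpa only [W, hi, if_true, if_false] using hU_mixing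
  exact isWeaklyMixing_of_tensor hW_norm (hW_mixing ⟨0, hmn⟩) ht htdense (V := V.toLinearMap)
    (fun x => (V.norm_map x).le) hV

/-- Let `U` be a unitary on a complex Hilbert space `H`.  If `U` is weakly
mixing, i.e. `(1/n) ∑_{k=1}^n |⟨U^k ξ, η⟩| → 0` for all `ξ, η ∈ H`, then for natural numbers
`m, n` with `m + n ≥ 1` the unitary `(U*)^{⊗m} ⊗ U^{⊗n}` on `H^{⊗(m+n)}` is weakly mixing.
The tensor power `H^{⊗(m+n)}` is encoded as a Hilbert space `K` together with a map `t` on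
elementary tensors having the correct inner products and total (dense) span, and `V` is the
unitary on `K` acting as `U*` on the first `m` factors and `U` on the remaining `n`. -/
theorem stmt3
    (H : Type*) [NormedAddCommGroup H] [InnerProductSpace ℂ H] [CompleteSpace H]
    (K : Type*) [NormedAddCommGroup K] [InnerProductSpace ℂ K] [CompleteSpace K]
    (U : H ≃ₗᵢ[ℂ] H) (m n : ℕ) (hmn : 1 ≤ m + n)
    (t : (Fin (m + n) → H) → K)
    (ht : ∀ f g : Fin (m + n) → H,
      (inner ℂ (t f) (t g) : ℂ) = ∏ i, (inner ℂ (f i) (g i) : ℂ))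
    (htdense : Dense (↑(Submodule.span ℂ (Set.range t)) : Set K))
    (V : K ≃ₗᵢ[ℂ] K)
    (hV : ∀ f : Fin (m + n) → H,
      V (t f) = t (fun i => if (i : ℕ) < m then U.symm (f i) else U (f i)))
    (hU : ∀ ξ η : H, Tendsto
      (fun N : ℕ => (N : ℝ)⁻¹ * ∑ k ∈ Icc 1 N, ‖(inner ℂ ((⇑U)^[k] ξ) η : ℂ)‖)
      atTop (nhds 0)) :
    ∀ ξ η : K, Tendsto
      (fun N : ℕ => (N : ℝ)⁻¹ * ∑ k ∈ Icc 1 N, ‖(inner ℂ ((⇑V)^[k] ξ) η : ℂ)‖)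
      atTop (nhds 0) :=
  stmt3_general H K U m n hmn t ht htdense V hV hU
end

section
/- Let {k_l} be any sequence of natural numbers, U a unitary on H, and α_U the Bogoliubov automorphism on the full Fock space. Then for any vectors f₁,…,f_m, g₁,…,g_n ∈ H, the operator norm of ∑_{l=1}^{N} α_U^{k_l}(a^+(f₁)⋯a^+(f_m) a(g₁)⋯a(g_n)) on F(H) is bounded above by the Hilbert-space norm of ∑_{l=1}^{N} U^{-k_l}f₁ ⊗ ⋯ ⊗ U^{-k_l}f_m ⊗ U^{k_l}g_n ⊗ ⋯ ⊗ U^{k_l}g₁ in H^{⊗(m+n)}. -/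
open Finset

structure FullFock (H F : Type*) [NormedAddCommGroup H] [InnerProductSpace ℂ H]
    [NormedAddCommGroup F] [InnerProductSpace ℂ F] where
  vac : F
  tens : (n : ℕ) → (Fin n → H) → F
  tens_zero : ∀ f : Fin 0 → H, tens 0 f = vac
  inner_tens : ∀ (n : ℕ) (f g : Fin n → H),
    (inner ℂ (tens n f) (tens n g) : ℂ) = ∏ i, (inner ℂ (f i) (g i) : ℂ)
  inner_tens_ne : ∀ (m n : ℕ) (f : Fin m → H) (g : Fin n → H), m ≠ n →
    (inner ℂ (tens m f) (tens n g) : ℂ) = 0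
  tens_add : ∀ (n : ℕ) (f : Fin n → H) (i : Fin n) (a b : H),
    tens n (Function.update f i (a + b))
      = tens n (Function.update f i a) + tens n (Function.update f i b)
  tens_smul : ∀ (n : ℕ) (f : Fin n → H) (i : Fin n) (c : ℂ) (a : H),
    tens n (Function.update f i (c • a)) = c • tens n (Function.update f i a)
  dense_span : Dense
    (↑(Submodule.span ℂ (⋃ n, Set.range (tens n))) : Set F)

/-!
On the full Fock space `a(h)` is the adjoint of `a⁺(h)` and `a⁺(h)* a⁺(h') = ⟪h, h'⟫ • 1`.
Hence the monomials `C_l = a⁺(U^{k_l} f₁)⋯a⁺(U^{k_l} f_m)` and `D_l = a(U^{k_l} g₁)⋯a(U^{k_l} g_n)`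
satisfy `C_l* C_l' = ⟪e_l, e_l'⟫ • 1` and `D_l D_l'* = ⟪d_l, d_l'⟫ • 1`, where `e_l`, `d_l` are
the tensors `⊗ᵢ U^{k_l} fᵢ` and `⊗ⱼ U^{k_l} g_{n+1-j}`. For `ψ ∈ F` this gives
`‖∑ C_l D_l ψ‖² = ∑ ⟪e_l, e_l'⟫ ⟪D_l ψ, D_l' ψ⟫`, and the C*-identity bounds the Gram matrix of
the `D_l ψ` in the Loewner order by `‖ψ‖²` times the transposed Gram matrix of the `d_l`.
The Schur product theorem against the Gram matrix of the `e_l` then yields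
`‖∑ C_l D_l ψ‖² ≤ ‖ψ‖² ∑ ⟪e_l, e_l'⟫ ⟪d_l', d_l⟫`; since `U` is unitary,
`⟪e_l, e_l'⟫ = ⟪U^{-k_l'} f, U^{-k_l} f⟫`, and the double sum is the squared norm of the tensor
on the right-hand side.
-/

open scoped InnerProductSpace

theorem LinearIsometryEquiv.inner_iterate_symm_apply {𝕜 E : Type*} [RCLike 𝕜]
    [NormedAddCommGroup E] [InnerProductSpace 𝕜 E] (U : E ≃ₗᵢ[𝕜] E) (a b : ℕ) (x y : E) :
    ⟪(⇑U.symm)^[a] x, (⇑U.symm)^[b] y⟫_𝕜 = ⟪(⇑U)^[b] x, (⇑U)^[a] y⟫_𝕜 := by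
  have hiso (c : ℕ) (u v : E) : ⟪(⇑U)^[c] u, (⇑U)^[c] v⟫_𝕜 = ⟪u, v⟫_𝕜 := by
    simpa [LinearIsometry.coe_pow] using (U.toLinearIsometry ^ c).inner_map_map u v
  have hcancel (c : ℕ) : Function.LeftInverse (⇑U)^[c] (⇑U.symm)^[c] :=
    Function.LeftInverse.iterate U.apply_symm_apply c
  calc ⟪(⇑U.symm)^[a] x, (⇑U.symm)^[b] y⟫_𝕜
      = ⟪(⇑U)^[b + a] ((⇑U.symm)^[a] x), (⇑U)^[a + b] ((⇑U.symm)^[b] y)⟫_𝕜 := by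
        rw [add_comm b a, hiso]
    _ = ⟪(⇑U)^[b] x, (⇑U)^[a] y⟫_𝕜 := by
        rw [Function.iterate_add_apply, Function.iterate_add_apply, hcancel, hcancel]

namespace FullFock

variable {H F : Type*} [NormedAddCommGroup H] [InnerProductSpace ℂ H]
  [NormedAddCommGroup F] [InnerProductSpace ℂ F] (FD : FullFock H F)

theorem ext_tens {G : Type*} [TopologicalSpace G] [AddCommMonoid G] [Module ℂ G] [T2Space G]
    {A B : F →L[ℂ] G} (h : ∀ n ξ, A (FD.tens n ξ) = B (FD.tens n ξ)) : A = B :=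
  ContinuousLinearMap.ext_on FD.dense_span (by rintro _ ⟨_, ⟨n, rfl⟩, ξ, rfl⟩; exact h n ξ)

theorem eq_of_inner_tens {x y : F} (h : ∀ n ξ, ⟪FD.tens n ξ, x⟫_ℂ = ⟪FD.tens n ξ, y⟫_ℂ) :
    x = y := by
  have h' : innerSL ℂ x = innerSL ℂ y :=
    FD.ext_tens fun n ξ => by
      simp only [innerSL_apply_apply, ← inner_conj_symm _ (FD.tens n ξ), h]
  exact ext_inner_right ℂ fun v => by simpa using congrArg (· v) h'

theorem ext_of_inner_tens {A B : F →L[ℂ] F}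
    (h : ∀ p ξ q η, ⟪FD.tens p ξ, A (FD.tens q η)⟫_ℂ = ⟪FD.tens p ξ, B (FD.tens q η)⟫_ℂ) :
    A = B :=
  FD.ext_tens fun q η => FD.eq_of_inner_tens fun p ξ => h p ξ q η

theorem inner_tens_cons (p q : ℕ) (h h' : H) (ξ : Fin p → H) (η : Fin q → H) :
    ⟪FD.tens (p + 1) (Fin.cons h ξ), FD.tens (q + 1) (Fin.cons h' η)⟫_ℂ
      = ⟪h, h'⟫_ℂ * ⟪FD.tens p ξ, FD.tens q η⟫_ℂ := by
  rcases eq_or_ne p q with rfl | hpq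
  · simp [FD.inner_tens, Fin.prod_univ_succ]
  · rw [FD.inner_tens_ne _ _ _ _ (by omega), FD.inner_tens_ne _ _ _ _ hpq, mul_zero]

theorem inner_tens_append {p q : ℕ} (x x' : Fin p → H) (y y' : Fin q → H) :
    ⟪FD.tens (p + q) (Fin.append x y), FD.tens (p + q) (Fin.append x' y')⟫_ℂ
      = ⟪FD.tens p x, FD.tens p x'⟫_ℂ * ⟪FD.tens q y, FD.tens q y'⟫_ℂ := by
  simp only [FD.inner_tens, Fin.prod_univ_add, Fin.append_left, Fin.append_right]

theorem inner_tens_iterate_symm (U : H ≃ₗᵢ[ℂ] H) (a b : ℕ) {p : ℕ} (x : Fin p → H) :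
    ⟪FD.tens p (fun i => (⇑U.symm)^[a] (x i)), FD.tens p (fun i => (⇑U.symm)^[b] (x i))⟫_ℂ
      = ⟪FD.tens p (fun i => (⇑U)^[b] (x i)), FD.tens p (fun i => (⇑U)^[a] (x i))⟫_ℂ := by
  simp only [FD.inner_tens, U.inner_iterate_symm_apply]

variable [CompleteSpace F] {cr an : H → F →L[ℂ] F}

theorem star_cr_mul_cr
    (hcr : ∀ (f : H) (n : ℕ) (g : Fin n → H), cr f (FD.tens n g) = FD.tens (n + 1) (Fin.cons f g))
    (h h' : H) : star (cr h) * cr h' = ⟪h, h'⟫_ℂ • 1 :=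
  FD.ext_of_inner_tens fun p ξ q η => by
    rw [mul_apply_eq_comp, ContinuousLinearMap.star_eq_adjoint,
      ContinuousLinearMap.adjoint_inner_right, smul_apply, one_apply_eq_self, inner_smul_right,
      hcr, hcr, inner_tens_cons]

theorem star_cr_eq_an
    (hcr : ∀ (f : H) (n : ℕ) (g : Fin n → H), cr f (FD.tens n g) = FD.tens (n + 1) (Fin.cons f g))
    (han_vac : ∀ f : H, an f FD.vac = 0)
    (han : ∀ (f : H) (n : ℕ) (g : Fin (n + 1) → H),
      an f (FD.tens (n + 1) g) = ⟪f, g 0⟫_ℂ • FD.tens n (fun j => g j.succ))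
    (h : H) : star (cr h) = an h :=
  FD.ext_of_inner_tens fun p ξ q η => by
    rw [ContinuousLinearMap.star_eq_adjoint, ContinuousLinearMap.adjoint_inner_right, hcr]
    cases q with
    | zero =>
      rw [FD.tens_zero, han_vac, inner_zero_right, ← FD.tens_zero η,
        FD.inner_tens_ne _ _ _ _ (Nat.succ_ne_zero p)]
    | succ q =>
      rw [han, inner_smul_right, ← Fin.cons_self_tail η, inner_tens_cons]
      rfl

end FullFock

section StarAlgebra

variable {H A : Type*} [NormedAddCommGroup H] [InnerProductSpace ℂ H]
  [Ring A] [StarRing A] [Algebra ℂ A] {c : H → A}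

theorem star_prod_ofFn_mul_prod_ofFn (hc : ∀ x y, star (c x) * c y = ⟪x, y⟫_ℂ • 1)
    {p : ℕ} (a a' : Fin p → H) :
    star (List.ofFn fun i => c (a i)).prod * (List.ofFn fun i => c (a' i)).prod
      = (∏ i, ⟪a i, a' i⟫_ℂ) • 1 := by
  induction p with
  | zero => simp
  | succ p ih =>
    simp only [List.ofFn_succ, List.prod_cons, star_mul, Fin.prod_univ_succ]
    rw [mul_assoc, ← mul_assoc (star (c (a 0))), hc, smul_one_mul, mul_smul_comm,
      ih (fun i => a i.succ), smul_smul]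

theorem prod_ofFn_star_mul_star_prod_ofFn (hc : ∀ x y, star (c x) * c y = ⟪x, y⟫_ℂ • 1)
    {p : ℕ} (b b' : Fin p → H) :
    (List.ofFn fun j => star (c (b j))).prod * star (List.ofFn fun j => star (c (b' j))).prod
      = (∏ j, ⟪b j, b' j⟫_ℂ) • 1 := by
  induction p with
  | zero => simp
  | succ p ih =>
    simp only [List.ofFn_succ, List.prod_cons, star_mul, star_star, Fin.prod_univ_succ]
    rw [mul_assoc, ← mul_assoc _ _ (c (b' 0)), ih (fun j => b j.succ), smul_one_mul,
      mul_smul_comm, hc, smul_smul, mul_comm]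

end StarAlgebra

section OperatorBound

open scoped ComplexOrder Matrix

theorem Matrix.PosSemidef.sum_hadamard_le {ι : Type*} [Fintype ι] {Γ A B : Matrix ι ι ℂ}
    (hΓ : Γ.PosSemidef) (hAB : (B - A).PosSemidef) :
    ∑ i, ∑ j, Γ i j * A i j ≤ ∑ i, ∑ j, Γ i j * B i j := by
  simpa [dotProduct, Matrix.mulVec, mul_sub, sum_sub_distrib] using
    (hΓ.hadamard hAB).dotProduct_mulVec_nonneg 1

variable {F E₁ E₂ W : Type*} [NormedAddCommGroup F] [InnerProductSpace ℂ F] [CompleteSpace F]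
  [NormedAddCommGroup E₁] [InnerProductSpace ℂ E₁] [NormedAddCommGroup E₂] [InnerProductSpace ℂ E₂]
  [NormedAddCommGroup W] [InnerProductSpace ℂ W] {ι : Type*} [Fintype ι]

theorem norm_sum_smul_le_of_mul_star {D : ι → F →L[ℂ] F} {d : ι → E₂}
    (hD : ∀ l l', D l * star (D l') = ⟪d l, d l'⟫_ℂ • 1) (x : ι → ℂ) :
    ‖∑ l, x l • D l‖ ≤ ‖∑ l, star (x l) • d l‖ := by
  set w := ∑ l, star (x l) • d l
  have hsq : (∑ l, x l • D l) * star (∑ l, x l • D l) = ⟪w, w⟫_ℂ • 1 := by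
    simp only [w, star_sum, star_smul, sum_mul, mul_sum, smul_mul_smul_comm, hD, sum_inner,
      inner_sum, inner_smul_left, inner_smul_right, smul_smul, ← sum_smul, RCLike.star_def,
      Complex.conj_conj]
    exact congrArg (· • _) (sum_congr rfl fun _ _ => sum_congr rfl fun _ _ => by ring)
  have hle : ‖∑ l, x l • D l‖ * ‖∑ l, x l • D l‖ ≤ ‖w‖ * ‖w‖ := by
    rw [← CStarRing.norm_self_mul_star, hsq]
    calc ‖⟪w, w⟫_ℂ • (1 : F →L[ℂ] F)‖ ≤ ‖⟪w, w⟫_ℂ‖ * 1 :=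
          (norm_smul_le _ _).trans (by gcongr; exact ContinuousLinearMap.norm_id_le)
      _ = ‖w‖ * ‖w‖ := by rw [mul_one, inner_self_eq_norm_sq_to_K]; simp [sq]
  exact (mul_self_le_mul_self_iff (norm_nonneg _) (norm_nonneg _)).2 hle

theorem posSemidef_sub_gram_apply_of_mul_star {D : ι → F →L[ℂ] F} {d : ι → E₂}
    (hD : ∀ l l', D l * star (D l') = ⟪d l, d l'⟫_ℂ • 1) (ψ : F) :
    ((‖ψ‖ ^ 2 : ℝ) • (Matrix.gram ℂ d)ᵀ - Matrix.gram ℂ fun l => D l ψ).PosSemidef := by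
  refine .of_dotProduct_mulVec_nonneg
    (((Matrix.isHermitian_gram ℂ d).transpose.smul (IsSelfAdjoint.all _)).sub
      (Matrix.isHermitian_gram ℂ _)) fun x => ?_
  have hK : star x ⬝ᵥ (Matrix.gram ℂ d)ᵀ *ᵥ x
      = ⟪∑ l, star (x l) • d l, ∑ l, star (x l) • d l⟫_ℂ := by
    rw [Matrix.dotProduct_mulVec, Matrix.vecMul_transpose, dotProduct_comm]
    simpa using Matrix.star_dotProduct_gram_mulVec d (star x) (star x)
  have hG : star x ⬝ᵥ (Matrix.gram ℂ fun l => D l ψ) *ᵥ x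
      = ⟪(∑ l, x l • D l) ψ, (∑ l, x l • D l) ψ⟫_ℂ := by
    simpa using Matrix.star_dotProduct_gram_mulVec (fun l => D l ψ) x x
  have hbound : ‖(∑ l, x l • D l) ψ‖ ^ 2 ≤ ‖ψ‖ ^ 2 * ‖∑ l, star (x l) • d l‖ ^ 2 := by
    rw [← mul_pow, mul_comm]
    exact pow_le_pow_left₀ (norm_nonneg _)
      (((∑ l, x l • D l).le_opNorm ψ).trans (by gcongr; exact norm_sum_smul_le_of_mul_star hD x)) 2
  rw [Matrix.sub_mulVec, dotProduct_sub, Matrix.smul_mulVec, dotProduct_smul, hK, hG,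
    inner_self_eq_norm_sq_to_K, inner_self_eq_norm_sq_to_K, sub_nonneg, Complex.real_smul]
  simpa using Complex.real_le_real.2 hbound

theorem norm_sum_mul_le_of_gram {C D : ι → F →L[ℂ] F} {e : ι → E₁} {d : ι → E₂}
    (hC : ∀ l l', star (C l) * C l' = ⟪e l, e l'⟫_ℂ • 1)
    (hD : ∀ l l', D l * star (D l') = ⟪d l, d l'⟫_ℂ • 1)
    (w : W) (hw : ⟪w, w⟫_ℂ = ∑ l, ∑ l', ⟪e l, e l'⟫_ℂ * ⟪d l', d l⟫_ℂ) :
    ‖∑ l, C l * D l‖ ≤ ‖w‖ := by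
  refine ContinuousLinearMap.opNorm_le_bound _ (norm_nonneg w) fun ψ => ?_
  have hinnerC (l l' : ι) (u u' : F) : ⟪C l u, C l' u'⟫_ℂ = ⟪e l, e l'⟫_ℂ * ⟪u, u'⟫_ℂ := by
    rw [← ContinuousLinearMap.adjoint_inner_right, ← ContinuousLinearMap.star_eq_adjoint,
      ← mul_apply_eq_comp, hC, smul_apply, one_apply_eq_self, inner_smul_right]
  have hT : ⟪(∑ l, C l * D l) ψ, (∑ l, C l * D l) ψ⟫_ℂ
      = ∑ l, ∑ l', ⟪e l, e l'⟫_ℂ * ⟪D l ψ, D l' ψ⟫_ℂ := by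
    simp only [_root_.sum_apply, mul_apply_eq_comp, sum_inner, inner_sum, hinnerC]
    exact sum_comm
  have hSchur := (Matrix.posSemidef_gram ℂ e).sum_hadamard_le
    (posSemidef_sub_gram_apply_of_mul_star hD ψ)
  simp only [Matrix.smul_apply, Matrix.transpose_apply, Matrix.gram_apply,
    Complex.real_smul, mul_left_comm _ ((‖ψ‖ ^ 2 : ℝ) : ℂ), ← mul_sum, ← hw, ← hT,
    inner_self_eq_norm_sq_to_K] at hSchur
  have hsq : ‖(∑ l, C l * D l) ψ‖ ^ 2 ≤ (‖w‖ * ‖ψ‖) ^ 2 := by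
    rw [mul_pow, mul_comm, ← Complex.real_le_real]
    simpa using hSchur
  exact (pow_le_pow_iff_left₀ (norm_nonneg _) (by positivity) two_ne_zero).1 hsq

end OperatorBound

theorem stmt19_general
    (H : Type*) [NormedAddCommGroup H] [InnerProductSpace ℂ H]
    (F : Type*) [NormedAddCommGroup F] [InnerProductSpace ℂ F] [CompleteSpace F]
    (FD : FullFock H F)
    (cr an : H → F →L[ℂ] F)
    (hcr : ∀ (f : H) (n : ℕ) (g : Fin n → H),
      cr f (FD.tens n g) = FD.tens (n + 1) (Fin.cons f g))
    (han_vac : ∀ f : H, an f FD.vac = 0)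
    (han : ∀ (f : H) (n : ℕ) (g : Fin (n + 1) → H),
      an f (FD.tens (n + 1) g)
        = (inner ℂ f (g 0) : ℂ) • FD.tens n (fun j => g j.succ))
    (U : H ≃ₗᵢ[ℂ] H)
    (m n : ℕ) (f : Fin m → H) (g : Fin n → H)
    (k : ℕ → ℕ) (N : ℕ) :
    ‖∑ l ∈ Icc 1 N,
        ((List.ofFn fun i : Fin m => cr ((⇑U)^[k l] (f i))).prod *
          (List.ofFn fun j : Fin n => an ((⇑U)^[k l] (g j))).prod)‖
      ≤ ‖∑ l ∈ Icc 1 N,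
          FD.tens (m + n)
            (Fin.append (fun i : Fin m => (⇑U.symm)^[k l] (f i))
              (fun j : Fin n => (⇑U)^[k l] (g j.rev)))‖ := by
  have hcr_star := FD.star_cr_mul_cr hcr
  have han_eq : an = fun h => star (cr h) :=
    funext fun h => (FD.star_cr_eq_an hcr han_vac han h).symm
  rw [← Finset.sum_coe_sort (Icc 1 N), ← Finset.sum_coe_sort (Icc 1 N)]
  refine norm_sum_mul_le_of_gram (e := fun l : Icc 1 N => FD.tens m fun i => (⇑U)^[k l] (f i))
    (d := fun l : Icc 1 N => FD.tens n fun j => (⇑U)^[k l] (g j.rev))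
    (fun l l' => ?_) (fun l l' => ?_) _ ?_
  · rw [FD.inner_tens]
    exact star_prod_ofFn_mul_prod_ofFn hcr_star _ _
  · rw [FD.inner_tens, han_eq, prod_ofFn_star_mul_star_prod_ofFn hcr_star]
    exact congrArg (· • 1) (Fintype.prod_equiv Fin.revPerm _ _ fun _ => by simp)
  · simp only [sum_inner, inner_sum, FD.inner_tens_append, FD.inner_tens_iterate_symm]

/-- let `{k_l}` be any sequence of natural numbers, `U` a unitary on `H`, and
`α_U` the Bogoliubov automorphism on the full Fock space, so that
`α_U^{k}(a⁺(f₁)⋯a⁺(f_m)a(g₁)⋯a(g_n)) = a⁺(U^k f₁)⋯a⁺(U^k f_m)a(U^k g₁)⋯a(U^k g_n)`.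
Then for any `f₁,…,f_m, g₁,…,g_n ∈ H` the operator norm of
`∑_{l=1}^N α_U^{k_l}(a⁺(f₁)⋯a⁺(f_m)a(g₁)⋯a(g_n))` on `F(H)` is bounded above by the
Hilbert-space norm of
`∑_{l=1}^N U^{-k_l}f₁ ⊗ ⋯ ⊗ U^{-k_l}f_m ⊗ U^{k_l}g_n ⊗ ⋯ ⊗ U^{k_l}g₁` in `H^{⊗(m+n)}`. -/
theorem stmt19
    (H : Type*) [NormedAddCommGroup H] [InnerProductSpace ℂ H] [CompleteSpace H]
    (F : Type*) [NormedAddCommGroup F] [InnerProductSpace ℂ F] [CompleteSpace F]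
    (FD : FullFock H F)
    (cr an : H → F →L[ℂ] F)
    (hcr : ∀ (f : H) (n : ℕ) (g : Fin n → H),
      cr f (FD.tens n g) = FD.tens (n + 1) (Fin.cons f g))
    (han_vac : ∀ f : H, an f FD.vac = 0)
    (han : ∀ (f : H) (n : ℕ) (g : Fin (n + 1) → H),
      an f (FD.tens (n + 1) g)
        = (inner ℂ f (g 0) : ℂ) • FD.tens n (fun j => g j.succ))
    (U : H ≃ₗᵢ[ℂ] H)
    (m n : ℕ) (f : Fin m → H) (g : Fin n → H)
    (k : ℕ → ℕ) (N : ℕ) :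
    ‖∑ l ∈ Icc 1 N,
        ((List.ofFn fun i : Fin m => cr ((⇑U)^[k l] (f i))).prod *
          (List.ofFn fun j : Fin n => an ((⇑U)^[k l] (g j))).prod)‖
      ≤ ‖∑ l ∈ Icc 1 N,
          FD.tens (m + n)
            (Fin.append (fun i : Fin m => (⇑U.symm)^[k l] (f i))
              (fun j : Fin n => (⇑U)^[k l] (g j.rev)))‖ :=
  stmt19_general H F FD cr an hcr han_vac han U m n f g k N
end
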